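/- arXiv:math-ph/0612022 — 5 statements merged into one kernel-verified Lean document; each statement's English description precedes it below -/
import Mathlib

section
/- Finite-time Girsanov theorem: Let m₀ be a probability measure on ℝ^d, let α ∈ ℝ^d, let K be a positive definite d×d real matrix, and let T ≥ 1 be an integer. Let w = (w(0), w(1), ..., w(T)) be independent random vectors with w(0) distributed according to m₀ and w(t) distributed according to N(α,K) for 1 ≤ t ≤ T. Let φ and ψ be measurable maps from ℝ^d to ℝ^d, and define two random trajectories x and y in (ℝ^d)^{{0,...,T}} by x(0) = w(0), x(t+1) = φ(x(t)) + w(t+1), and y(0) = w(0), y(t+1) = ψ(y(t)) + w(t+1). Let P and Q be the probability laws of x and y on (ℝ^d)^{{0,...,T}}. Then Q is absolutely continuous with respect to P, and for P-almost every η, dQ/dP(η) = exp( Σ_{t=0}^{T−1} [ −(1/2)·(ψ(η(t))−φ(η(t)))ᵀ K⁻¹ (ψ(η(t))−φ(η(t))) + (ψ(η(t))−φ(η(t)))ᵀ K⁻¹ (η(t+1) − α − φ(η(t))) ] ). -/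
/-!
The noise driving a path `η` is recovered as its innovations `v 0 = η 0`,
`v (t+1) = η (t+1) - φ (η t)`, and running the recursion inverts this, so `x = trajectory φ w`.
With respect to `ν = law(w 0) ⊗ Leb^T` the innovation map preserves measure: after splitting off
the last coordinate it is the innovation map of the shorter path followed by a translation of the
last coordinate by an amount depending only on the earlier ones. Since `law(w) = ν` with density
`∏ₜ g (v (t+1))`, `g` the Gaussian density, the law of `x` is `ν` with density
`∏ₜ g (η (t+1) - φ (η t))`, likewise for `y` with `ψ`, and completing the square in the ratio of
the Gaussian factors gives `dQ/dP`.
-/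

open MeasureTheory ProbabilityTheory Matrix

/-- The Gaussian probability measure `N(α, K)` on `ℝ^d` (realized as `Fin d → ℝ`) with mean
`α` and positive definite covariance matrix `K`, defined by its density
`(2π)^{−d/2} det(K)^{−1/2} exp(−½ (x−α)ᵀ K⁻¹ (x−α))` with respect to Lebesgue measure. -/
noncomputable def multiGaussian (d : ℕ) (α : Fin d → ℝ) (K : Matrix (Fin d) (Fin d) ℝ) :
    Measure (Fin d → ℝ) :=
  (volume : Measure (Fin d → ℝ)).withDensity fun x =>
    ENNReal.ofReal ((2 * Real.pi) ^ (-(d : ℝ) / 2) * K.det ^ (-(1 : ℝ) / 2) *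
      Real.exp (-(1 / 2) * ((x - α) ⬝ᵥ K⁻¹ *ᵥ (x - α))))

open scoped ENNReal

theorem MeasurableEquiv.map_withDensity {α β : Type*} [MeasurableSpace α] [MeasurableSpace β]
    (e : α ≃ᵐ β) (μ : Measure α) (f : α → ℝ≥0∞) :
    (μ.withDensity f).map e = (μ.map e).withDensity (f ∘ e.symm) := by
  ext s hs
  rw [e.map_apply, withDensity_apply _ (e.measurable hs), withDensity_apply _ hs,
    e.restrict_map, lintegral_map_equiv]
  simp

theorem MeasureTheory.Measure.pi_withDensity {n : ℕ} {X : Type*} [MeasurableSpace X]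
    (μ : Fin n → Measure X) [∀ i, SigmaFinite (μ i)] (f : Fin n → X → ℝ≥0∞)
    (hf : ∀ i, Measurable (f i)) [∀ i, SigmaFinite ((μ i).withDensity (f i))] :
    Measure.pi (fun i ↦ (μ i).withDensity (f i)) =
      (Measure.pi μ).withDensity fun x ↦ ∏ i, f i (x i) := by
  induction n with
  | zero =>
    simp only [Finset.univ_eq_empty, Finset.prod_empty]
    rw [← Pi.one_def, withDensity_one, Subsingleton.elim (fun i ↦ (μ i).withDensity (f i)) μ]
  | succ n ih =>
    let e := MeasurableEquiv.piFinSuccAbove (fun _ : Fin (n + 1) ↦ X) 0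
    rw [← (measurePreserving_piFinSuccAbove _ 0).symm e |>.map_eq,
      ← ((measurePreserving_piFinSuccAbove μ 0).symm e).map_eq]
    simp only [Fin.zero_succAbove]
    rw [ih _ _ fun i ↦ hf i.succ, prod_withDensity (hf 0) (by fun_prop), e.symm.map_withDensity]
    congr 1
    ext x
    simp [e, Fin.prod_univ_succ]
    rfl

instance MeasureTheory.Measure.sigmaFinite_cons {X : Type*} [MeasurableSpace X] {n : ℕ}
    (m₀ μ : Measure X) [SigmaFinite m₀] [SigmaFinite μ] (i : Fin (n + 1)) :
    SigmaFinite ((Fin.cons m₀ fun _ ↦ μ : Fin (n + 1) → Measure X) i) := by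
  induction i using Fin.cases <;> simp only [Fin.cons_zero, Fin.cons_succ] <;> infer_instance

section Innovations

variable {X : Type*} [AddCommGroup X] {n : ℕ}

def innovations (φ : X → X) (η : Fin (n + 1) → X) : Fin (n + 1) → X :=
  Fin.cons (η 0) fun t ↦ η t.succ - φ (η t.castSucc)

def trajectory (φ : X → X) (v : Fin (n + 1) → X) : Fin (n + 1) → X :=
  Fin.induction (v 0) fun t a ↦ φ a + v t.succ

@[simp] lemma innovations_zero (φ : X → X) (η : Fin (n + 1) → X) : innovations φ η 0 = η 0 := rfl

@[simp] lemma innovations_succ (φ : X → X) (η : Fin (n + 1) → X) (t : Fin n) :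
    innovations φ η t.succ = η t.succ - φ (η t.castSucc) := rfl

@[simp] lemma trajectory_zero (φ : X → X) (v : Fin (n + 1) → X) : trajectory φ v 0 = v 0 := rfl

@[simp] lemma trajectory_succ (φ : X → X) (v : Fin (n + 1) → X) (t : Fin n) :
    trajectory φ v t.succ = φ (trajectory φ v t.castSucc) + v t.succ := rfl

lemma innovations_last (φ : X → X) (η : Fin (n + 2) → X) :
    innovations φ η (Fin.last (n + 1)) = η (Fin.last (n + 1)) - φ (η (Fin.last n).castSucc) := by
  rw [← Fin.succ_last, innovations_succ]

lemma init_innovations (φ : X → X) (η : Fin (n + 2) → X) :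
    Fin.init (innovations φ η) = innovations φ (Fin.init η) := by
  ext t
  induction t using Fin.cases <;> simp [Fin.init]

lemma eq_trajectory_of_forall {φ : X → X} {η v : Fin (n + 1) → X} (h0 : η 0 = v 0)
    (hsucc : ∀ t : Fin n, η t.succ = φ (η t.castSucc) + v t.succ) : η = trajectory φ v := by
  ext t
  induction t using Fin.induction with
  | zero => exact h0
  | succ t ih => rw [hsucc, trajectory_succ, ih]

lemma innovations_trajectory (φ : X → X) (v : Fin (n + 1) → X) :
    innovations φ (trajectory φ v) = v := by
  ext t
  induction t using Fin.cases <;> simp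

lemma trajectory_innovations (φ : X → X) (η : Fin (n + 1) → X) :
    trajectory φ (innovations φ η) = η :=
  (eq_trajectory_of_forall (η := η) (v := innovations φ η) rfl fun t ↦ by simp).symm

variable [MeasurableSpace X]

lemma measurable_innovations [MeasurableSub₂ X] {φ : X → X} (hφ : Measurable φ) :
    Measurable (innovations (n := n) φ) := by
  refine measurable_pi_lambda _ fun t ↦ ?_
  induction t using Fin.cases with
  | zero => exact measurable_pi_apply 0
  | succ t => exact (measurable_pi_apply _).sub (hφ.comp (measurable_pi_apply _))

lemma measurable_trajectory [MeasurableAdd₂ X] {φ : X → X} (hφ : Measurable φ) :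
    Measurable (trajectory (n := n) φ) := by
  refine measurable_pi_lambda _ fun t ↦ ?_
  induction t using Fin.induction with
  | zero => exact measurable_pi_apply 0
  | succ t ih => exact (hφ.comp ih).add (measurable_pi_apply _)

def innovationsEquiv [MeasurableAdd₂ X] [MeasurableSub₂ X] {φ : X → X} (hφ : Measurable φ) :
    (Fin (n + 1) → X) ≃ᵐ (Fin (n + 1) → X) where
  toFun := innovations φ
  invFun := trajectory φ
  left_inv := trajectory_innovations φ
  right_inv := innovations_trajectory φ
  measurable_toFun := measurable_innovations hφ
  measurable_invFun := measurable_trajectory hφ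

lemma measurePreserving_innovations [MeasurableSub₂ X] {φ : X → X} (hφ : Measurable φ)
    (m₀ μ : Measure X) [SigmaFinite m₀] [SigmaFinite μ] [μ.IsAddRightInvariant] :
    MeasurePreserving (innovations φ)
      (Measure.pi (Fin.cons m₀ fun _ ↦ μ : Fin (n + 1) → Measure X))
      (Measure.pi (Fin.cons m₀ fun _ ↦ μ)) := by
  induction n with
  | zero =>
    convert MeasurePreserving.id _
    ext η t
    rw [Fin.fin_one_eq_zero t]
    rfl
  | succ n ih =>
    set ρ : Measure (Fin (n + 1) → X) := Measure.pi (Fin.cons m₀ fun _ ↦ μ)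
    let e := MeasurableEquiv.piFinSuccAbove (fun _ : Fin (n + 2) ↦ X) (Fin.last (n + 1))
    have he : MeasurePreserving e (Measure.pi (Fin.cons m₀ fun _ ↦ μ)) (μ.prod ρ) := by
      convert measurePreserving_piFinSuccAbove (Fin.cons m₀ fun _ ↦ μ : Fin (n + 2) → Measure X)
        (Fin.last (n + 1)) using 2
      · simp [← Fin.succ_last]
      · simp only [ρ, Fin.succAbove_last]
        congr 1
        funext j
        induction j using Fin.cases <;> simp
    have hstep : MeasurePreserving
        (fun p : (Fin (n + 1) → X) × X ↦ (innovations φ p.1, p.2 - φ (p.1 (Fin.last n))))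
        (ρ.prod μ) (ρ.prod μ) :=
      ih.skew_product (g := fun ξ v ↦ v - φ (ξ (Fin.last n)))
        (measurable_snd.sub (hφ.comp ((measurable_pi_apply _).comp measurable_fst)))
        (ae_of_all _ fun ξ ↦ by
          simpa [sub_eq_add_neg] using map_add_right_eq_self μ (-φ (ξ (Fin.last n))))
    have hfactor : innovations φ = e.symm ∘ Prod.swap ∘ (fun p : (Fin (n + 1) → X) × X ↦
        (innovations φ p.1, p.2 - φ (p.1 (Fin.last n)))) ∘ Prod.swap ∘ e := by
      funext η
      apply e.injective
      simp [e, innovations_last, init_innovations, Fin.init]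
    rw [hfactor]
    exact (he.symm e).comp (Measure.measurePreserving_swap.comp
      (hstep.comp (Measure.measurePreserving_swap.comp he)))

theorem map_trajectory_eq_withDensity [MeasurableAdd₂ X] [MeasurableSub₂ X] {Ω : Type*}
    [MeasurableSpace Ω] (P : Measure Ω) [IsProbabilityMeasure P] (μ : Measure X) [SigmaFinite μ]
    [μ.IsAddRightInvariant]
    {g : X → ℝ≥0∞} (hg : Measurable g) (w : Fin (n + 1) → Ω → X) (hwm : ∀ t, Measurable (w t))
    (hindep : iIndepFun w P) (hw : ∀ t : Fin n, P.map (w t.succ) = μ.withDensity g)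
    {φ : X → X} (hφ : Measurable φ) :
    P.map (fun ω ↦ trajectory φ fun t ↦ w t ω) =
      (Measure.pi (Fin.cons (P.map (w 0)) fun _ ↦ μ)).withDensity
        fun η ↦ ∏ t : Fin n, g (η t.succ - φ (η t.castSucc)) := by
  have := Measure.isProbabilityMeasure_map (μ := P) (hwm 0).aemeasurable
  set B : Fin (n + 1) → Measure X := Fin.cons (P.map (w 0)) fun _ ↦ μ
  set f : Fin (n + 1) → X → ℝ≥0∞ := Fin.cons 1 fun _ ↦ g
  have hmarg : (fun t ↦ P.map (w t)) = fun t ↦ (B t).withDensity (f t) := by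
    funext t
    induction t using Fin.cases <;> simp [B, f, hw]
  have (t : Fin (n + 1)) : SigmaFinite ((B t).withDensity (f t)) := by
    rw [← congrFun hmarg t]
    have := Measure.isProbabilityMeasure_map (μ := P) (hwm t).aemeasurable
    infer_instance
  have hlaw : P.map (fun ω t ↦ w t ω) =
      (Measure.pi B).withDensity fun v ↦ ∏ t : Fin n, g (v t.succ) := by
    rw [hindep.map_fun_eq_pi_map fun t ↦ (hwm t).aemeasurable, hmarg,
      Measure.pi_withDensity B f fun t ↦ ?_]
    · simp [f, Fin.prod_univ_succ]
    · induction t using Fin.cases <;> simp [f, hg, measurable_one]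
  have he : MeasurePreserving (innovationsEquiv (n := n) hφ).symm (Measure.pi B) (Measure.pi B) :=
    (measurePreserving_innovations hφ _ μ).symm _
  change P.map ((innovationsEquiv hφ).symm ∘ fun ω t ↦ w t ω) = _
  rw [← Measure.map_map (innovationsEquiv hφ).symm.measurable (measurable_pi_lambda _ hwm), hlaw,
    MeasurableEquiv.map_withDensity, he.map_eq]
  rfl

end Innovations

theorem Matrix.IsSymm.sub_dotProduct_mulVec_sub {ι R : Type*} [Fintype ι] [CommRing R]
    {S : Matrix ι ι R} (hS : S.IsSymm) (u c : ι → R) :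
    (u - c) ⬝ᵥ S *ᵥ (u - c) = u ⬝ᵥ S *ᵥ u - 2 * (c ⬝ᵥ S *ᵥ u) + c ⬝ᵥ S *ᵥ c := by
  have hcomm : u ⬝ᵥ S *ᵥ c = c ⬝ᵥ S *ᵥ u := by
    rw [dotProduct_mulVec, ← mulVec_transpose, hS.eq, dotProduct_comm]
  rw [sub_dotProduct, mulVec_sub, dotProduct_sub, dotProduct_sub, hcomm]
  ring

section Gaussian

variable {d : ℕ} (α : Fin d → ℝ) (K : Matrix (Fin d) (Fin d) ℝ)

noncomputable def multiGaussianDensity (x : Fin d → ℝ) : ℝ≥0∞ :=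
  ENNReal.ofReal ((2 * Real.pi) ^ (-(d : ℝ) / 2) * K.det ^ (-(1 : ℝ) / 2) *
    Real.exp (-(1 / 2) * ((x - α) ⬝ᵥ K⁻¹ *ᵥ (x - α))))

@[fun_prop]
lemma measurable_multiGaussianDensity : Measurable (multiGaussianDensity α K) := by
  unfold multiGaussianDensity
  fun_prop

noncomputable def girsanovDensity (φ ψ : (Fin d → ℝ) → Fin d → ℝ) {T : ℕ}
    (η : Fin (T + 1) → Fin d → ℝ) : ℝ≥0∞ :=
  ENNReal.ofReal (Real.exp (∑ t : Fin T,
    (-(1 / 2) * ((ψ (η t.castSucc) - φ (η t.castSucc)) ⬝ᵥ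
        K⁻¹ *ᵥ (ψ (η t.castSucc) - φ (η t.castSucc))) +
      (ψ (η t.castSucc) - φ (η t.castSucc)) ⬝ᵥ K⁻¹ *ᵥ (η t.succ - α - φ (η t.castSucc)))))

variable {α K}

lemma multiGaussianDensity_sub (hK : K.IsSymm) (z p q : Fin d → ℝ) :
    multiGaussianDensity α K (z - q) = multiGaussianDensity α K (z - p) *
      ENNReal.ofReal (Real.exp (-(1 / 2) * ((q - p) ⬝ᵥ K⁻¹ *ᵥ (q - p)) +
        (q - p) ⬝ᵥ K⁻¹ *ᵥ (z - α - p))) := by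
  unfold multiGaussianDensity
  rw [← ENNReal.ofReal_mul' (Real.exp_pos _).le, mul_assoc _ (Real.exp _), ← Real.exp_add,
    show z - q - α = (z - α - p) - (q - p) by abel, show z - p - α = z - α - p by abel,
    hK.inv.sub_dotProduct_mulVec_sub]
  ring_nf

lemma measurable_girsanovDensity {φ ψ : (Fin d → ℝ) → Fin d → ℝ} (hφ : Measurable φ)
    (hψ : Measurable ψ) {T : ℕ} : Measurable (girsanovDensity α K φ ψ (T := T)) := by
  unfold girsanovDensity
  fun_prop

lemma prod_multiGaussianDensity_eq_mul_girsanovDensity (hK : K.IsSymm)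
    (φ ψ : (Fin d → ℝ) → Fin d → ℝ) {T : ℕ} (η : Fin (T + 1) → Fin d → ℝ) :
    ∏ t : Fin T, multiGaussianDensity α K (η t.succ - ψ (η t.castSucc)) =
      (∏ t : Fin T, multiGaussianDensity α K (η t.succ - φ (η t.castSucc))) *
        girsanovDensity α K φ ψ η := by
  rw [girsanovDensity, Real.exp_sum, ENNReal.ofReal_prod_of_nonneg fun _ _ ↦ (Real.exp_pos _).le,
    ← Finset.prod_mul_distrib]
  exact Finset.prod_congr rfl fun t _ ↦ multiGaussianDensity_sub hK _ _ _

end Gaussian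

theorem finite_time_girsanov_general
    {Ω : Type*} [MeasurableSpace Ω] (Pr : Measure Ω) [IsProbabilityMeasure Pr]
    (d T : ℕ)
    (α : Fin d → ℝ) (K : Matrix (Fin d) (Fin d) ℝ) (hK : K.PosDef)
    (w : Fin (T + 1) → Ω → (Fin d → ℝ))
    (hwm : ∀ t, Measurable (w t))
    (hwindep : iIndepFun w Pr)
    (hwt : ∀ t : Fin T, Measure.map (w t.succ) Pr = multiGaussian d α K)
    (φ ψ : (Fin d → ℝ) → (Fin d → ℝ)) (hφ : Measurable φ) (hψ : Measurable ψ)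
    (x y : Ω → Fin (T + 1) → (Fin d → ℝ))
    (hx0 : ∀ ω, x ω 0 = w 0 ω)
    (hxs : ∀ ω, ∀ t : Fin T, x ω t.succ = φ (x ω t.castSucc) + w t.succ ω)
    (hy0 : ∀ ω, y ω 0 = w 0 ω)
    (hys : ∀ ω, ∀ t : Fin T, y ω t.succ = ψ (y ω t.castSucc) + w t.succ ω) :
    Measure.map y Pr ≪ Measure.map x Pr ∧
    ∀ᵐ η ∂(Measure.map x Pr),
      (Measure.map y Pr).rnDeriv (Measure.map x Pr) η =
        ENNReal.ofReal (Real.exp (∑ t : Fin T,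
          (-(1 / 2) * ((ψ (η t.castSucc) - φ (η t.castSucc)) ⬝ᵥ
              K⁻¹ *ᵥ (ψ (η t.castSucc) - φ (η t.castSucc))) +
            (ψ (η t.castSucc) - φ (η t.castSucc)) ⬝ᵥ
              K⁻¹ *ᵥ (η t.succ - α - φ (η t.castSucc))))) := by
  have hKsymm : K.IsSymm := isHermitian_iff_isSymm.mp hK.isHermitian
  have hx : x = fun ω ↦ trajectory φ fun t ↦ w t ω :=
    funext fun ω ↦ eq_trajectory_of_forall (hx0 ω) (hxs ω)
  have hy : y = fun ω ↦ trajectory ψ fun t ↦ w t ω :=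
    funext fun ω ↦ eq_trajectory_of_forall (hy0 ω) (hys ω)
  -- `hwt` applies as is: `multiGaussian d α K` unfolds to
  -- `volume.withDensity (multiGaussianDensity α K)`
  have hP := map_trajectory_eq_withDensity Pr volume (measurable_multiGaussianDensity α K) w hwm
    hwindep hwt hφ
  have hQ := map_trajectory_eq_withDensity Pr volume (measurable_multiGaussianDensity α K) w hwm
    hwindep hwt hψ
  rw [← hx] at hP
  rw [← hy] at hQ
  have hQP : Pr.map y = (Pr.map x).withDensity (girsanovDensity α K φ ψ) := by
    rw [hQ, hP, ← withDensity_mul _ (by fun_prop) (measurable_girsanovDensity hφ hψ)]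
    congr 1
    funext η
    exact prod_multiGaussianDensity_eq_mul_girsanovDensity hKsymm φ ψ η
  have hxm : Measurable x := by
    rw [hx]
    exact (measurable_trajectory hφ).comp (measurable_pi_lambda _ hwm)
  have := Measure.isProbabilityMeasure_map (μ := Pr) hxm.aemeasurable
  rw [hQP]
  exact ⟨withDensity_absolutelyContinuous _ _,
    Measure.rnDeriv_withDensity _ (measurable_girsanovDensity hφ hψ)⟩

/-- **Finite-time Girsanov theorem.** Let `w(0) ~ m₀` and `w(1),…,w(T) ~ N(α,K)` be
independent random vectors in `ℝ^d` (`K` positive definite, `T ≥ 1`), let `φ, ψ` be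
measurable maps of `ℝ^d`, and define trajectories `x(0) = y(0) = w(0)`,
`x(t+1) = φ(x(t)) + w(t+1)`, `y(t+1) = ψ(y(t)) + w(t+1)`.  If `P` and `Q` are the laws of
`x` and `y` on `(ℝ^d)^{0,…,T}`, then `Q ≪ P` with density
`dQ/dP(η) = exp ∑_{t=0}^{T−1} [ −½ (ψ(η(t))−φ(η(t)))ᵀK⁻¹(ψ(η(t))−φ(η(t)))
+ (ψ(η(t))−φ(η(t)))ᵀK⁻¹(η(t+1)−α−φ(η(t))) ]` for `P`-a.e. `η`. -/
theorem finite_time_girsanov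
    {Ω : Type*} [MeasurableSpace Ω] (Pr : Measure Ω) [IsProbabilityMeasure Pr]
    (d T : ℕ) (hT : 1 ≤ T)
    (m₀ : Measure (Fin d → ℝ)) [IsProbabilityMeasure m₀]
    (α : Fin d → ℝ) (K : Matrix (Fin d) (Fin d) ℝ) (hK : K.PosDef)
    (w : Fin (T + 1) → Ω → (Fin d → ℝ))
    (hwm : ∀ t, Measurable (w t))
    (hwindep : iIndepFun w Pr)
    (hw0 : Measure.map (w 0) Pr = m₀)
    (hwt : ∀ t : Fin T, Measure.map (w t.succ) Pr = multiGaussian d α K)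
    (φ ψ : (Fin d → ℝ) → (Fin d → ℝ)) (hφ : Measurable φ) (hψ : Measurable ψ)
    (x y : Ω → Fin (T + 1) → (Fin d → ℝ)) (hxm : Measurable x) (hym : Measurable y)
    (hx0 : ∀ ω, x ω 0 = w 0 ω)
    (hxs : ∀ ω, ∀ t : Fin T, x ω t.succ = φ (x ω t.castSucc) + w t.succ ω)
    (hy0 : ∀ ω, y ω 0 = w 0 ω)
    (hys : ∀ ω, ∀ t : Fin T, y ω t.succ = ψ (y ω t.castSucc) + w t.succ ω) :
    Measure.map y Pr ≪ Measure.map x Pr ∧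
    ∀ᵐ η ∂(Measure.map x Pr),
      (Measure.map y Pr).rnDeriv (Measure.map x Pr) η =
        ENNReal.ofReal (Real.exp (∑ t : Fin T,
          (-(1 / 2) * ((ψ (η t.castSucc) - φ (η t.castSucc)) ⬝ᵥ
              K⁻¹ *ᵥ (ψ (η t.castSucc) - φ (η t.castSucc))) +
            (ψ (η t.castSucc) - φ (η t.castSucc)) ⬝ᵥ
              K⁻¹ *ᵥ (η t.succ - α - φ (η t.castSucc))))) :=
  finite_time_girsanov_general Pr d T α K hK w hwm hwindep hwt φ ψ hφ hψ x y hx0 hxs hy0 hys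
end

section
/- Exchangeability lemma (Sznitman): Let F be a measurable space, let k ≥ 1 and N ≥ k be integers, and let Q_N be a probability measure on F^N that is exchangeable, i.e. invariant under the pushforward by every coordinate permutation of F^N. Let f_1,...,f_k : F → ℝ be bounded measurable functions with |f_i| ≤ M_i. Then | ∫_{F^N} Π_{i=1}^k ( (1/N)·Σ_{j=1}^N f_i(u_j) ) dQ_N(u) − ∫_{F^N} Π_{i=1}^k f_i(u_i) dQ_N(u) | ≤ 2·(Π_{i=1}^k M_i)·( 1 − N!/((N−k)!·N^k) ). In particular, for any sequence (Q_N)_{N ≥ k} of exchangeable probability measures on F^N, the difference of the two integrals tends to 0 as N → ∞. -/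
/-!
Expanding the product of empirical means gives `N⁻ᵏ ∑_{j : Fin k → Fin N} ∫ ∏ᵢ fᵢ(u_{jᵢ}) dQ_N`.
Some permutation of the coordinates carries an injective `j` to the inclusion `Fin k ↪ Fin N`,
so by exchangeability each of the `N!/(N-k)!` injective terms equals `∫ ∏ᵢ fᵢ(uᵢ) dQ_N`.
Only the remaining `N^k - N!/(N-k)!` terms contribute to the difference, each by at most
`2 ∏ᵢ Mᵢ`, and `N!/((N-k)! N^k) → 1`.
-/

open MeasureTheory Filter

namespace MeasureTheory.Measure

def IsExchangeable {ι α : Type*} [MeasurableSpace α] (μ : Measure (ι → α)) : Prop :=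
  ∀ s : Equiv.Perm ι, μ.map (fun u i => u (s i)) = μ

variable {ι κ α E : Type*} [MeasurableSpace α] [NormedAddCommGroup E] [NormedSpace ℝ E]

theorem IsExchangeable.integral_comp_perm {μ : Measure (ι → α)} (hμ : μ.IsExchangeable)
    (s : Equiv.Perm ι) (g : (ι → α) → E) :
    ∫ u, g (fun i => u (s i)) ∂μ = ∫ u, g u ∂μ := by
  let e : (ι → α) ≃ᵐ (ι → α) := MeasurableEquiv.arrowCongr' s.symm (MeasurableEquiv.refl α)
  have he : ⇑e = fun u i => u (s i) := rfl
  change ∫ u, g (e u) ∂μ = _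
  rw [← integral_map_equiv e g, he, hμ s]

theorem IsExchangeable.integral_comp_embedding [Finite ι] {μ : Measure (κ → α)}
    (hμ : μ.IsExchangeable) (x y : ι ↪ κ) (g : (ι → α) → E) :
    ∫ u, g (u ∘ x) ∂μ = ∫ u, g (u ∘ y) ∂μ := by
  obtain ⟨σ, hσ⟩ := Equiv.Perm.exists_smul_eq_embedding y x
  rw [← hσ, ← hμ.integral_comp_perm σ (fun v => g (v ∘ y))]
  rfl

end MeasureTheory.Measure

theorem Fintype.card_subtype_injective (α β : Type*) [Fintype α] [Fintype β] [DecidableEq α]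
    [DecidableEq β] :
    Fintype.card {f : α → β // Function.Injective f} = (card β).descFactorial (card α) := by
  rw [Fintype.card_congr (Equiv.subtypeInjectiveEquivEmbedding α β), Fintype.card_embedding_eq]

theorem abs_sum_sub_card_mul_le {ι : Type*} [Fintype ι] (p : ι → Prop) [DecidablePred p]
    {a : ι → ℝ} {c B : ℝ} (hp : ∀ j, p j → a j = c) (hB : ∀ j, |a j - c| ≤ B) :
    |∑ j, a j - Fintype.card ι * c| ≤ Fintype.card {j // ¬ p j} * B := by
  have hsum : ∑ j, a j - Fintype.card ι * c = ∑ j with ¬ p j, (a j - c) := by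
    rw [Finset.sum_filter_of_ne (p := fun j => ¬ p j)
        fun j _ h hj => h (sub_eq_zero.mpr (hp j hj)), Finset.sum_sub_distrib,
      Finset.sum_const, Finset.card_univ, nsmul_eq_mul]
  rw [hsum, Fintype.card_subtype, ← nsmul_eq_mul]
  exact (Finset.abs_sum_le_sum_abs _ _).trans (Finset.sum_le_card_nsmul _ _ _ fun j _ => hB j)

theorem tendsto_descFactorial_div_pow (k : ℕ) :
    Tendsto (fun N : ℕ => (N.descFactorial k : ℝ) / (N : ℝ) ^ k) atTop (nhds 1) := by
  refine (Asymptotics.isEquivalent_iff_tendsto_one ?_).mp (isEquivalent_descFactorial k)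
  filter_upwards [eventually_ge_atTop 1] with N hN
  positivity

theorem norm_prod_comp_le {ι κ F : Type*} [Fintype ι] {f : ι → F → ℝ} {M : ι → ℝ}
    (hfb : ∀ i x, |f i x| ≤ M i) (j : ι → κ) (u : κ → F) :
    ‖∏ i, f i (u (j i))‖ ≤ ∏ i, M i := by
  rw [Real.norm_eq_abs, Finset.abs_prod]
  exact Finset.prod_le_prod (fun i _ => abs_nonneg _) fun i _ => hfb i _

section ProductsOfCoordinates

variable {ι κ F : Type*} [Fintype ι] [MeasurableSpace F] {μ : Measure (κ → F)}
  {f : ι → F → ℝ} {M : ι → ℝ}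

theorem integrable_prod_comp [IsFiniteMeasure μ] (hfm : ∀ i, Measurable (f i))
    (hfb : ∀ i x, |f i x| ≤ M i) (j : ι → κ) :
    Integrable (fun u : κ → F => ∏ i, f i (u (j i))) μ :=
  .of_bound
    (Finset.measurable_prod _ fun i _ => (hfm i).comp (measurable_pi_apply _)).aestronglyMeasurable
    (∏ i, M i) (ae_of_all _ (norm_prod_comp_le hfb j))

theorem abs_integral_prod_comp_le [IsProbabilityMeasure μ] (hfb : ∀ i x, |f i x| ≤ M i)
    (j : ι → κ) : |∫ u, ∏ i, f i (u (j i)) ∂μ| ≤ ∏ i, M i := by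
  simpa using norm_integral_le_of_norm_le_const (μ := μ) (ae_of_all _ (norm_prod_comp_le hfb j))

end ProductsOfCoordinates

theorem integral_prod_empirical_mean_eq {F : Type*} [MeasurableSpace F] {k N : ℕ}
    {f : Fin k → F → ℝ} {M : Fin k → ℝ} (hfm : ∀ i, Measurable (f i))
    (hfb : ∀ i x, |f i x| ≤ M i) (μ : Measure (Fin N → F)) [IsFiniteMeasure μ] :
    ∫ u, ∏ i, ((1 / (N : ℝ)) * ∑ j, f i (u j)) ∂μ =
      (∑ j : Fin k → Fin N, ∫ u, ∏ i, f i (u (j i)) ∂μ) / (N : ℝ) ^ k := by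
  have hexpand : ∀ u : Fin N → F, ∏ i, ((1 / (N : ℝ)) * ∑ j, f i (u j)) =
      (∑ j : Fin k → Fin N, ∏ i, f i (u (j i))) / (N : ℝ) ^ k := fun u => by
    rw [Finset.prod_mul_distrib, Fintype.prod_sum, Finset.prod_const, Finset.card_univ,
      Fintype.card_fin, one_div_pow, one_div_mul_eq_div]
  simp_rw [hexpand]
  rw [integral_div, integral_finsetSum _ fun j _ => integrable_prod_comp hfm hfb j]

theorem abs_integral_prod_empirical_mean_sub_le {F : Type*} [MeasurableSpace F] {k N : ℕ}
    (hkN : k ≤ N) {f : Fin k → F → ℝ} {M : Fin k → ℝ} (hfm : ∀ i, Measurable (f i))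
    (hfb : ∀ i x, |f i x| ≤ M i) {μ : Measure (Fin N → F)} [IsProbabilityMeasure μ]
    (hμ : μ.IsExchangeable) :
    |∫ u, ∏ i, ((1 / (N : ℝ)) * ∑ j, f i (u j)) ∂μ -
        ∫ u, ∏ i, f i (u (Fin.castLE hkN i)) ∂μ| ≤
      2 * (∏ i, M i) * (1 - (N.descFactorial k : ℝ) / (N : ℝ) ^ k) := by
  classical
  set T : (Fin k → Fin N) → ℝ := fun j => ∫ u, ∏ i, f i (u (j i)) ∂μ
  set c := T (Fin.castLE hkN)
  have hinj : ∀ j, Function.Injective j → T j = c := fun j hj =>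
    hμ.integral_comp_embedding ⟨j, hj⟩ (Fin.castLEEmb hkN) fun v => ∏ i, f i (v i)
  have hdist : ∀ j, |T j - c| ≤ 2 * ∏ i, M i := fun j => by
    have := abs_sub (T j) c
    linarith [abs_integral_prod_comp_le (μ := μ) hfb j,
      abs_integral_prod_comp_le (μ := μ) hfb (Fin.castLE hkN)]
  have hcard : Fintype.card {j : Fin k → Fin N // ¬ Function.Injective j} =
      N ^ k - N.descFactorial k := by
    rw [Fintype.card_subtype_compl, Fintype.card_subtype_injective, Fintype.card_fun]
    simp only [Fintype.card_fin]
  have hpow : (0 : ℝ) < (N : ℝ) ^ k := by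
    exact_mod_cast (Nat.descFactorial_pos.mpr hkN).trans_le (Nat.descFactorial_le_pow N k)
  have hsum := abs_sum_sub_card_mul_le _ hinj hdist
  rw [hcard, Nat.cast_sub (Nat.descFactorial_le_pow N k), Fintype.card_fun] at hsum
  simp only [Fintype.card_fin, Nat.cast_pow] at hsum
  rw [integral_prod_empirical_mean_eq hfm hfb, div_sub' hpow.ne', abs_div, abs_of_pos hpow,
    div_le_iff₀ hpow]
  exact hsum.trans_eq (by field_simp)

theorem sznitman_exchangeability_general
    {F : Type*} [MeasurableSpace F] (k : ℕ)
    (f : Fin k → F → ℝ) (M : Fin k → ℝ)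
    (hfm : ∀ i, Measurable (f i)) (hfb : ∀ i x, |f i x| ≤ M i)
    (Q : (N : ℕ) → Measure (Fin N → F))
    (hprob : ∀ N, k ≤ N → IsProbabilityMeasure (Q N))
    (hexch : ∀ (N : ℕ), k ≤ N → ∀ s : Equiv.Perm (Fin N),
      Measure.map (fun u i => u (s i)) (Q N) = Q N) :
    (∀ (N : ℕ) (hkN : k ≤ N),
      |(∫ u, ∏ i : Fin k, ((1 / (N : ℝ)) * ∑ j : Fin N, f i (u j)) ∂(Q N)) -
          ∫ u, ∏ i : Fin k, f i (u (Fin.castLE hkN i)) ∂(Q N)| ≤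
        2 * (∏ i, M i) *
          (1 - (N.factorial : ℝ) / ((N - k).factorial * (N : ℝ) ^ k))) ∧
    Tendsto
      (fun N : ℕ =>
        if hkN : k ≤ N then
          (∫ u, ∏ i : Fin k, ((1 / (N : ℝ)) * ∑ j : Fin N, f i (u j)) ∂(Q N)) -
            ∫ u, ∏ i : Fin k, f i (u (Fin.castLE hkN i)) ∂(Q N)
        else 0)
      atTop (nhds 0) := by
  have hbound (N : ℕ) (hkN : k ≤ N) :=
    haveI := hprob N hkN
    abs_integral_prod_empirical_mean_sub_le hkN hfm hfb (hexch N hkN)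
  refine ⟨fun N hkN => ?_, ?_⟩
  · rw [← Nat.factorial_mul_descFactorial hkN, Nat.cast_mul,
      mul_div_mul_left _ _ (by positivity)]
    exact hbound N hkN
  · refine squeeze_zero_norm' ?_ (by
      simpa using (tendsto_descFactorial_div_pow k).const_sub 1 |>.const_mul (2 * ∏ i, M i))
    filter_upwards [eventually_ge_atTop k] with N hkN
    rw [dif_pos hkN]
    exact hbound N hkN

/-- **Exchangeability lemma (Sznitman).** Let `(Q_N)` be exchangeable probability measures
on `F^N` and let `f_1,…,f_k : F → ℝ` be measurable with `|f_i| ≤ M_i`.  Then for every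
`N ≥ k`,
`| ∫ ∏_i (N⁻¹ ∑_j f_i(u_j)) dQ_N − ∫ ∏_i f_i(u_i) dQ_N |
  ≤ 2 (∏_i M_i) (1 − N!/((N−k)!·N^k))`,
and in particular the difference of the two integrals tends to `0` as `N → ∞`. -/
theorem sznitman_exchangeability
    {F : Type*} [MeasurableSpace F] (k : ℕ) (hk : 1 ≤ k)
    (f : Fin k → F → ℝ) (M : Fin k → ℝ)
    (hfm : ∀ i, Measurable (f i)) (hfb : ∀ i x, |f i x| ≤ M i)
    (Q : (N : ℕ) → Measure (Fin N → F))
    (hprob : ∀ N, k ≤ N → IsProbabilityMeasure (Q N))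
    (hexch : ∀ (N : ℕ), k ≤ N → ∀ s : Equiv.Perm (Fin N),
      Measure.map (fun u i => u (s i)) (Q N) = Q N) :
    (∀ (N : ℕ) (hkN : k ≤ N),
      |(∫ u, ∏ i : Fin k, ((1 / (N : ℝ)) * ∑ j : Fin N, f i (u j)) ∂(Q N)) -
          ∫ u, ∏ i : Fin k, f i (u (Fin.castLE hkN i)) ∂(Q N)| ≤
        2 * (∏ i, M i) *
          (1 - (N.factorial : ℝ) / ((N - k).factorial * (N : ℝ) ^ k))) ∧
    Tendsto
      (fun N : ℕ =>
        if hkN : k ≤ N then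
          (∫ u, ∏ i : Fin k, ((1 / (N : ℝ)) * ∑ j : Fin N, f i (u j)) ∂(Q N)) -
            ∫ u, ∏ i : Fin k, f i (u (Fin.castLE hkN i)) ∂(Q N)
        else 0)
      atTop (nhds 0) :=
  sznitman_exchangeability_general k f M hfm hfb Q hprob hexch
end

section
/- Properties of the Legendre transform of the log-generating function: Let μ be a Borel probability measure on ℝ^d such that Λ(p) := log ∫_{ℝ^d} exp(⟨p,x⟩) dμ(x) is finite for every p ∈ ℝ^d, and define Λ*(a) := sup_{p ∈ ℝ^d} ( ⟨p,a⟩ − Λ(p) ) for a ∈ ℝ^d (with values in [0,∞]). Let ā = ∫_{ℝ^d} x dμ(x) be the mean of μ (which exists since all exponential moments are finite). Then: (a) Λ* is a convex function on ℝ^d; (b) Λ*(a) ≥ 0 for every a ∈ ℝ^d; (c) Λ*(ā) = 0; and (d) conversely, if Λ*(a) = 0 for some a ∈ ℝ^d, then a = ā. -/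
open MeasureTheory

/-- The log-generating function `Λ(p) = log ∫ exp⟨p,x⟩ dμ(x)` of a measure on `ℝ^d`. -/
noncomputable def logGen (d : ℕ) (μ : Measure (Fin d → ℝ)) (p : Fin d → ℝ) : ℝ :=
  Real.log (∫ x, Real.exp (∑ i, p i * x i) ∂μ)

/-- The Legendre transform `Λ*(a) = sup_p (⟨p,a⟩ − Λ(p))`, with values in `(−∞, ∞]`
(realized in `EReal`). -/
noncomputable def legendreTransform (d : ℕ) (μ : Measure (Fin d → ℝ)) (a : Fin d → ℝ) :
    EReal :=
  ⨆ p : Fin d → ℝ, (((∑ i, p i * a i) - logGen d μ p : ℝ) : EReal)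

/-!
Convexity is inherited from the supremum of the affine functions `a ↦ ⟨p,a⟩ − Λ(p)`, and
`p = 0` gives `Λ* ≥ 0`. Jensen's inequality `exp ⟨p,ā⟩ ≤ ∫ exp ⟨p,x⟩ dμ` says `⟨p,ā⟩ ≤ Λ(p)`,
i.e. `Λ*(ā) ≤ 0`. Conversely, if `Λ*(a) = 0` then along each coordinate direction the function
`t ↦ Λ(t eᵢ) − t aᵢ`, the cumulant generating function of `xᵢ` minus a linear term, is
nonnegative and vanishes at `0`, so its derivative `āᵢ − aᵢ` at `0` vanishes.
-/

open ProbabilityTheory Real Filter Topology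

theorem ProbabilityTheory.eq_integral_of_mul_le_cgf {Ω : Type*} [MeasurableSpace Ω]
    {μ : Measure Ω} [IsProbabilityMeasure μ] {X : Ω → ℝ} {a : ℝ}
    (h0 : 0 ∈ interior (integrableExpSet X μ)) (h : ∀ᶠ t in 𝓝 0, t * a ≤ cgf X μ t) :
    a = μ[X] := by
  have hmin : IsLocalMin (fun t => cgf X μ t - t * a) 0 :=
    h.mono fun t ht => by simpa [cgf_zero] using ht
  have hderiv : HasDerivAt (fun t => cgf X μ t - t * a) (μ[X] - a) 0 := by
    have hcgf := (analyticAt_cgf h0).differentiableAt.hasDerivAt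
    rw [deriv_cgf_zero h0, probReal_univ, div_one] at hcgf
    exact hcgf.sub (hasDerivAt_mul_const a)
  linarith [hmin.hasDerivAt_eq_zero hderiv]

section

variable {d : ℕ} {μ : Measure (Fin d → ℝ)}

lemma sum_single_mul (i : Fin d) (t : ℝ) (x : Fin d → ℝ) :
    ∑ j, (Pi.single i t : Fin d → ℝ) j * x j = t * x i := by
  simp [Pi.single_apply]

lemma logGen_single (i : Fin d) (t : ℝ) :
    logGen d μ (Pi.single i t) = cgf (fun x => x i) μ t := by
  simp only [logGen, cgf, mgf, sum_single_mul]

lemma integrableExpSet_coord_eq_univ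
    (hexp : ∀ p : Fin d → ℝ, Integrable (fun x => exp (∑ i, p i * x i)) μ) (i : Fin d) :
    integrableExpSet (fun x => x i) μ = Set.univ :=
  Set.eq_univ_of_forall fun t => (by simpa only [sum_single_mul] using hexp (Pi.single i t) :
    Integrable (fun x => exp (t * x i)) μ)

lemma integrable_coord
    (hexp : ∀ p : Fin d → ℝ, Integrable (fun x => exp (∑ i, p i * x i)) μ) (i : Fin d) :
    Integrable (fun x => x i) μ :=
  integrable_of_mem_interior_integrableExpSet (by simp [integrableExpSet_coord_eq_univ hexp i])

lemma integral_sum_mul_coord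
    (hexp : ∀ p : Fin d → ℝ, Integrable (fun x => exp (∑ i, p i * x i)) μ) (p : Fin d → ℝ) :
    ∫ x, ∑ i, p i * x i ∂μ = ∑ i, p i * ∫ x, x i ∂μ := by
  rw [integral_finsetSum _ fun i _ => (integrable_coord hexp i).const_mul (p i)]
  simp only [integral_const_mul]

lemma integral_le_logGen [IsProbabilityMeasure μ] {p : Fin d → ℝ}
    (hlin : Integrable (fun x => ∑ i, p i * x i) μ)
    (hexp : Integrable (fun x => exp (∑ i, p i * x i)) μ) :
    ∫ x, ∑ i, p i * x i ∂μ ≤ logGen d μ p := by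
  rw [logGen, le_log_iff_exp_le (integral_exp_pos hexp)]
  exact convexOn_exp.map_integral_le continuousOn_exp isClosed_univ (by simp) hlin hexp

lemma le_legendreTransform (a p : Fin d → ℝ) :
    (((∑ i, p i * a i) - logGen d μ p : ℝ) : EReal) ≤ legendreTransform d μ a :=
  le_iSup (fun p => (((∑ i, p i * a i) - logGen d μ p : ℝ) : EReal)) p

lemma legendreTransform_nonpos_iff {a : Fin d → ℝ} :
    legendreTransform d μ a ≤ 0 ↔ ∀ p, ∑ i, p i * a i ≤ logGen d μ p := by
  simp only [legendreTransform, iSup_le_iff, ← EReal.coe_zero, EReal.coe_le_coe_iff, sub_nonpos]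

lemma legendreTransform_nonneg [IsProbabilityMeasure μ] (a : Fin d → ℝ) :
    0 ≤ legendreTransform d μ a := by
  simpa [logGen] using le_legendreTransform (μ := μ) a 0

lemma legendreTransform_convex (a b : Fin d → ℝ) {t₁ t₂ : ℝ} (h₁ : 0 ≤ t₁) (h₂ : 0 ≤ t₂)
    (h₁₂ : t₁ + t₂ = 1) :
    legendreTransform d μ (t₁ • a + t₂ • b) ≤
      (t₁ : EReal) * legendreTransform d μ a + (t₂ : EReal) * legendreTransform d μ b := by
  refine iSup_le fun p => ?_
  have hsum : ∑ i, p i * (t₁ • a + t₂ • b) i = t₁ * ∑ i, p i * a i + t₂ * ∑ i, p i * b i := by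
    rw [Finset.mul_sum, Finset.mul_sum, ← Finset.sum_add_distrib]
    refine Finset.sum_congr rfl fun i _ => ?_
    simp only [Pi.add_apply, Pi.smul_apply, smul_eq_mul]
    ring
  have hsplit : (∑ i, p i * (t₁ • a + t₂ • b) i) - logGen d μ p
      = t₁ * ((∑ i, p i * a i) - logGen d μ p) + t₂ * ((∑ i, p i * b i) - logGen d μ p) := by
    rw [hsum]
    linear_combination logGen d μ p * h₁₂
  rw [hsplit, EReal.coe_add, EReal.coe_mul, EReal.coe_mul]
  exact add_le_add (mul_le_mul_of_nonneg_left (le_legendreTransform a p) (mod_cast h₁))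
    (mul_le_mul_of_nonneg_left (le_legendreTransform b p) (mod_cast h₂))

lemma legendreTransform_mean [IsProbabilityMeasure μ]
    (hexp : ∀ p : Fin d → ℝ, Integrable (fun x => exp (∑ i, p i * x i)) μ) :
    legendreTransform d μ (fun i => ∫ x, x i ∂μ) = 0 := by
  refine le_antisymm (legendreTransform_nonpos_iff.2 fun p => ?_) (legendreTransform_nonneg _)
  rw [← integral_sum_mul_coord hexp p]
  exact integral_le_logGen (integrable_finsetSum _ fun i _ =>
    (integrable_coord hexp i).const_mul (p i)) (hexp p)

lemma eq_mean_of_legendreTransform_nonpos [IsProbabilityMeasure μ]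
    (hexp : ∀ p : Fin d → ℝ, Integrable (fun x => exp (∑ i, p i * x i)) μ) {a : Fin d → ℝ}
    (ha : legendreTransform d μ a ≤ 0) :
    a = fun i => ∫ x, x i ∂μ := by
  funext i
  refine eq_integral_of_mul_le_cgf (by simp [integrableExpSet_coord_eq_univ hexp i])
    (Eventually.of_forall fun t => ?_)
  simpa only [sum_single_mul, logGen_single] using legendreTransform_nonpos_iff.1 ha
    (Pi.single i t)

end

/-- **Properties of the Legendre transform of the log-generating function.** Let `μ` be a
Borel probability measure on `ℝ^d` with all exponential moments finite, let `Λ*` be the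
Legendre transform of its log-generating function and `ā = ∫ x dμ` the mean of `μ`.  Then
(a) `Λ*` is convex; (b) `Λ* ≥ 0`; (c) `Λ*(ā) = 0`; and (d) if `Λ*(a) = 0` then `a = ā`. -/
theorem legendreTransform_properties (d : ℕ) (μ : Measure (Fin d → ℝ))
    [IsProbabilityMeasure μ]
    (hexp : ∀ p : Fin d → ℝ, Integrable (fun x => Real.exp (∑ i, p i * x i)) μ) :
    -- (a) convexity
    (∀ a b : Fin d → ℝ, ∀ t₁ t₂ : ℝ, 0 ≤ t₁ → 0 ≤ t₂ → t₁ + t₂ = 1 →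
      legendreTransform d μ (t₁ • a + t₂ • b) ≤
        (t₁ : EReal) * legendreTransform d μ a + (t₂ : EReal) * legendreTransform d μ b) ∧
    -- (b) nonnegativity
    (∀ a : Fin d → ℝ, 0 ≤ legendreTransform d μ a) ∧
    -- (c) the transform vanishes at the mean
    legendreTransform d μ (fun i => ∫ x, x i ∂μ) = 0 ∧
    -- (d) the mean is the only zero
    (∀ a : Fin d → ℝ, legendreTransform d μ a = 0 → a = fun i => ∫ x, x i ∂μ) :=
  ⟨fun a b _ _ h₁ h₂ h₁₂ => legendreTransform_convex a b h₁ h₂ h₁₂, legendreTransform_nonneg,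
    legendreTransform_mean hexp, fun _ ha => eq_mean_of_legendreTransform_nonpos hexp ha.le⟩
end

section
/- Balanced-inhibition mean-field map: Let f(x) = exp(x)/(1 + exp(x)) be the logistic function, let γ = N(0,1) be the standard Gaussian measure on ℝ, and fix g > 0 and θ ∈ ℝ. Define h : [0,∞) → ℝ by h(q) = ∫_ℝ f( g·sqrt(q)·ξ − θ )² dγ(ξ). Then: (i) h is continuous on [0,∞); (ii) 0 < h(q) < 1 for every q ≥ 0; (iii) h(q) → 1/2 as q → ∞; and (iv) h has a fixed point in the open interval (0,1), i.e. there exists q* ∈ (0,1) with h(q*) = q*. -/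
/-!
The logistic function is Mathlib's `Real.sigmoid`, and `h(q)` is the mean of `σ(s ξ - θ)²` under
`γ` at slope `s = g √q`. Since `0 < σ² < 1` pointwise, so is the mean; continuity and the limit
come from dominated convergence with the constant bound `1`. As `s → ∞` the integrand tends to the
indicator of `ξ > 0` off the null set `{0}`, whose mean under the symmetric atomless law `γ` is
`1/2`. A fixed point in `[0, 1]` exists by the intermediate value theorem, and it lies in `(0, 1)`
because `h` takes values there.
-/

open MeasureTheory ProbabilityTheory Filter

noncomputable def logisticFn (x : ℝ) : ℝ := Real.exp x / (1 + Real.exp x)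

noncomputable def balancedMFMap (g θ q : ℝ) : ℝ :=
  ∫ ξ, (logisticFn (g * Real.sqrt q * ξ - θ)) ^ 2 ∂(gaussianReal 0 1)

open Real Set Topology

lemma logisticFn_eq_sigmoid : logisticFn = sigmoid := by
  ext x
  rw [logisticFn, sigmoid_def, exp_neg]
  field_simp
  ring

lemma integral_mem_Ioo_of_forall_mem_Ioo {α : Type*} [MeasurableSpace α] {μ : Measure α}
    [IsProbabilityMeasure μ] {f : α → ℝ} {a b : ℝ} (hf : AEStronglyMeasurable f μ)
    (h : ∀ x, f x ∈ Ioo a b) : ∫ x, f x ∂μ ∈ Ioo a b := by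
  have hfi : Integrable f μ :=
    .of_bound hf (max |a| |b|) (.of_forall fun x => abs_le_max_abs_abs (h x).1.le (h x).2.le)
  have integral_pos {u : α → ℝ} (hu : Integrable u μ) (hpos : ∀ x, 0 < u x) :
      0 < ∫ x, u x ∂μ := by
    rw [integral_pos_iff_support_of_nonneg (fun x => (hpos x).le) hu,
      Function.support_eq_univ fun x => (hpos x).ne', measure_univ]
    exact one_pos
  have lower := integral_pos (u := fun x => f x - a) (hfi.sub (integrable_const a))
    fun x => sub_pos.2 (h x).1
  have upper := integral_pos (u := fun x => b - f x) ((integrable_const b).sub hfi)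
    fun x => sub_pos.2 (h x).2
  rw [integral_sub hfi (integrable_const a), integral_const, probReal_univ, one_smul] at lower
  rw [integral_sub (integrable_const b) hfi, integral_const, probReal_univ, one_smul] at upper
  exact ⟨by linarith, by linarith⟩

lemma measureReal_Ioi_zero_eq_half (μ : Measure ℝ) [IsProbabilityMeasure μ] [μ.IsNegInvariant]
    [NullSingletonClass μ] : μ.real (Ioi 0) = 1 / 2 := by
  have symm : μ.real (Iio 0) = μ.real (Ioi 0) := by
    rw [← neg_zero, ← neg_Ioi, measureReal_def, measureReal_def, Measure.measure_neg, neg_zero]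
  have total : μ.real (Iio 0) + μ.real (Ioi 0) = 1 := by
    rw [← measureReal_union Iio_disjoint_Ioi_same measurableSet_Ioi,
      Iio_union_Ioi, probReal_compl_eq_one_sub (measurableSet_singleton 0),
      measureReal_def, measure_singleton, ENNReal.toReal_zero, sub_zero]
  linarith

instance isNegInvariant_gaussianReal_zero (v : NNReal) : (gaussianReal 0 v).IsNegInvariant :=
  ⟨by rw [Measure.neg_def, gaussianReal_map_neg, neg_zero]⟩

noncomputable def sigmoidSqMean (μ : Measure ℝ) (θ s : ℝ) : ℝ :=
  ∫ ξ, sigmoid (s * ξ - θ) ^ 2 ∂μ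

section SigmoidSqMean

variable (μ : Measure ℝ) (θ : ℝ)

lemma continuous_sigmoid_mul_sub_sq : Continuous fun p : ℝ × ℝ => sigmoid (p.1 * p.2 - θ) ^ 2 :=
  (continuous_sigmoid.comp (by fun_prop)).pow 2

lemma aestronglyMeasurable_sigmoid_mul_sub_sq (s : ℝ) :
    AEStronglyMeasurable (fun ξ => sigmoid (s * ξ - θ) ^ 2) μ :=
  ((continuous_sigmoid_mul_sub_sq θ).comp (Continuous.prodMk_right s)).aestronglyMeasurable

lemma sigmoid_sq_mem_Ioo (x : ℝ) : sigmoid x ^ 2 ∈ Ioo 0 1 :=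
  ⟨by have := sigmoid_pos x; positivity,
    pow_lt_one₀ (sigmoid_nonneg x) (sigmoid_lt_one x) two_ne_zero⟩

lemma norm_sigmoid_sq_le_one (x : ℝ) : ‖sigmoid x ^ 2‖ ≤ 1 := by
  rw [Real.norm_of_nonneg (sigmoid_sq_mem_Ioo x).1.le]
  exact (sigmoid_sq_mem_Ioo x).2.le

lemma sigmoidSqMean_mem_Ioo [IsProbabilityMeasure μ] (s : ℝ) : sigmoidSqMean μ θ s ∈ Ioo 0 1 :=
  integral_mem_Ioo_of_forall_mem_Ioo (aestronglyMeasurable_sigmoid_mul_sub_sq μ θ s)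
    fun _ => sigmoid_sq_mem_Ioo _

lemma continuous_sigmoidSqMean [IsFiniteMeasure μ] : Continuous (sigmoidSqMean μ θ) :=
  continuous_of_dominated (aestronglyMeasurable_sigmoid_mul_sub_sq μ θ)
    (fun _ => .of_forall fun _ => norm_sigmoid_sq_le_one _) (integrable_const 1)
    (.of_forall fun ξ => (continuous_sigmoid_mul_sub_sq θ).comp (Continuous.prodMk_left ξ))

lemma tendsto_sigmoid_mul_sub_sq_atTop {ξ : ℝ} (hξ : ξ ≠ 0) :
    Tendsto (fun s => sigmoid (s * ξ - θ) ^ 2) atTop (𝓝 ((Ioi 0).indicator 1 ξ)) := by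
  rcases hξ.lt_or_gt with hneg | hpos
  · rw [indicator_of_notMem (notMem_Ioi.2 hneg.le), ← zero_pow two_ne_zero]
    exact (tendsto_sigmoid_atBot.comp <| tendsto_atBot_add_const_right _ (-θ) <|
      tendsto_id.atTop_mul_const_of_neg hneg).pow 2
  · rw [indicator_of_mem (mem_Ioi.2 hpos), Pi.one_apply, ← one_pow 2]
    exact (tendsto_sigmoid_atTop.comp <| tendsto_atTop_add_const_right _ (-θ) <|
      tendsto_id.atTop_mul_const hpos).pow 2

lemma tendsto_sigmoidSqMean_atTop [IsProbabilityMeasure μ] [μ.IsNegInvariant]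
    [NullSingletonClass μ] : Tendsto (sigmoidSqMean μ θ) atTop (𝓝 (1 / 2)) := by
  rw [← measureReal_Ioi_zero_eq_half μ, ← integral_indicator_one measurableSet_Ioi]
  refine tendsto_integral_filter_of_dominated_convergence 1
    (.of_forall (aestronglyMeasurable_sigmoid_mul_sub_sq μ θ))
    (.of_forall fun _ => .of_forall fun _ => norm_sigmoid_sq_le_one _) (integrable_const 1) ?_
  filter_upwards [μ.ae_ne 0] with ξ hξ
  exact tendsto_sigmoid_mul_sub_sq_atTop θ hξ

end SigmoidSqMean

lemma balancedMFMap_eq_comp (g θ : ℝ) :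
    balancedMFMap g θ = sigmoidSqMean (gaussianReal 0 1) θ ∘ fun q => g * √q := by
  ext q
  simp only [balancedMFMap, sigmoidSqMean, logisticFn_eq_sigmoid, Function.comp_apply]

/-- **Balanced-inhibition mean-field map.** For `g > 0` and `θ ∈ ℝ`, the map
`h(q) = ∫ f(g √q ξ − θ)² dN(0,1)(ξ)` (with `f` the logistic function) is
(i) continuous on `[0,∞)`, (ii) takes values in `(0,1)` on `[0,∞)`,
(iii) tends to `1/2` as `q → ∞`, and (iv) has a fixed point `q* ∈ (0,1)`. -/
theorem balancedMFMap_properties (g θ : ℝ) (hg : 0 < g) :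
    ContinuousOn (balancedMFMap g θ) (Set.Ici 0) ∧
    (∀ q : ℝ, 0 ≤ q → 0 < balancedMFMap g θ q ∧ balancedMFMap g θ q < 1) ∧
    Tendsto (balancedMFMap g θ) atTop (nhds (1 / 2)) ∧
    ∃ qstar ∈ Set.Ioo (0 : ℝ) 1, balancedMFMap g θ qstar = qstar := by
  have : NullSingletonClass (gaussianReal 0 1) := nullSingletonClass_gaussianReal one_ne_zero
  have mem_Ioo (q : ℝ) : balancedMFMap g θ q ∈ Ioo 0 1 := by
    rw [balancedMFMap_eq_comp]
    exact sigmoidSqMean_mem_Ioo _ θ _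
  have continuous : Continuous (balancedMFMap g θ) := by
    rw [balancedMFMap_eq_comp]
    exact (continuous_sigmoidSqMean _ θ).comp (by fun_prop)
  refine ⟨continuous.continuousOn, fun q _ => mem_Ioo q, ?_, ?_⟩
  · rw [balancedMFMap_eq_comp]
    exact (tendsto_sigmoidSqMean_atTop _ θ).comp (tendsto_sqrt_atTop.const_mul_atTop hg)
  · obtain ⟨q, -, hq⟩ := exists_mem_Icc_isFixedPt continuous.continuousOn zero_le_one
      (mem_Ioo 0).1.le (mem_Ioo 1).2.le
    exact ⟨q, hq ▸ mem_Ioo q, hq⟩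
end

section
/- Laplace asymptotics of the stationary firing-rate integral: Fix a ∈ ℝ. For b ∈ ℝ define F(b) = ∫_0^∞ e^{−y²}·( e^{2by} − e^{2ay} )/y dy; the integrand extends continuously to y = 0 (with value 2(b−a)) and the integral converges for every b. Then lim_{b → +∞} b·e^{−b²}·F(b) = sqrt(π); equivalently, F(b) is asymptotically equivalent to sqrt(π)·e^{b²}/b as b → +∞. -/
/-!
Substituting `y = t + b` turns `b e^{-b²} F(b)` into `∫_{-b}^∞ K_b(t) dt` with
`K_b(t) = b / (t + b) · e^{-t²} · (1 - e^{-2(b-a)(t+b)})`. As `b → ∞`, `K_b(t) → e^{-t²}` pointwise,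
and once `b ≥ |a|` the kernel is dominated by `32 e^{-t²/2}`: for `t ≥ -b/2` the factor `b / (t + b)`
is at most `2`, while for `t < -b/2` the bound `1 - e^{-x} ≤ x` absorbs the singular factor and leaves
`2b(b-a) e^{-t²} ≤ 16 t² e^{-t²}`. Dominated convergence then gives the limit `∫ e^{-t²} = √π`.
-/

open MeasureTheory Filter Real Set Topology

theorem setIntegral_Ioi_comp_add_right {E : Type*} [NormedAddCommGroup E] [NormedSpace ℝ E]
    (f : ℝ → E) (b c : ℝ) : ∫ t in Ioi (c - b), f (t + b) = ∫ y in Ioi c, f y := by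
  rw [← preimage_add_const_Ioi]
  exact (measurePreserving_add_right volume b).setIntegral_preimage_emb
    (measurableEmbedding_addRight b) f _

theorem sq_mul_exp_neg_sq_le (t : ℝ) : t ^ 2 * exp (-t ^ 2) ≤ 2 * exp (-(1 / 2) * t ^ 2) := by
  have h_split : exp (-t ^ 2) = exp (-(1 / 2) * t ^ 2) * exp (-(t ^ 2 / 2)) := by
    rw [← exp_add]; ring_nf
  have h_half : t ^ 2 * exp (-(t ^ 2 / 2)) ≤ 2 := by
    rw [exp_neg, ← div_eq_mul_inv, div_le_iff₀ (exp_pos _)]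
    linarith [add_one_le_exp (t ^ 2 / 2)]
  calc t ^ 2 * exp (-t ^ 2) = exp (-(1 / 2) * t ^ 2) * (t ^ 2 * exp (-(t ^ 2 / 2))) := by
        rw [h_split]; ring
    _ ≤ exp (-(1 / 2) * t ^ 2) * 2 := by gcongr
    _ = 2 * exp (-(1 / 2) * t ^ 2) := mul_comm _ _

noncomputable def laplaceKernel (a b t : ℝ) : ℝ :=
  b / (t + b) * exp (-t ^ 2) * (1 - exp (-(2 * (b - a) * (t + b))))

theorem mul_exp_neg_sq_mul_integrand_eq (a b y : ℝ) :
    b * exp (-b ^ 2) * (exp (-y ^ 2) * (exp (2 * b * y) - exp (2 * a * y)) / y) =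
      laplaceKernel a b (y - b) := by
  have h_b : exp (-b ^ 2) * exp (-y ^ 2) * exp (2 * b * y) = exp (-(y - b) ^ 2) := by
    rw [← exp_add, ← exp_add]; ring_nf
  have h_a : exp (-b ^ 2) * exp (-y ^ 2) * exp (2 * a * y) =
      exp (-(y - b) ^ 2) * exp (-(2 * (b - a) * y)) := by
    rw [← exp_add, ← exp_add, ← exp_add]; ring_nf
  rw [laplaceKernel, sub_add_cancel, div_eq_mul_inv, div_eq_mul_inv]
  linear_combination (b * y⁻¹) * (h_b - h_a)

theorem integral_eq_setIntegral_laplaceKernel (a b : ℝ) :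
    b * exp (-b ^ 2) *
        ∫ y in Ioi (0 : ℝ), exp (-y ^ 2) * (exp (2 * b * y) - exp (2 * a * y)) / y =
      ∫ t in Ioi (-b), laplaceKernel a b t := by
  rw [← integral_const_mul, ← setIntegral_Ioi_comp_add_right _ b, zero_sub]
  simp_rw [mul_exp_neg_sq_mul_integrand_eq, add_sub_cancel_right]

theorem abs_laplaceKernel_le {a b : ℝ} (hab : |a| ≤ b) {t : ℝ} (ht : -b < t) :
    |laplaceKernel a b t| ≤ 32 * exp (-(1 / 2) * t ^ 2) := by
  have hb : 0 ≤ b := (abs_nonneg a).trans hab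
  have hba : 0 ≤ b - a := by linarith [le_abs_self a]
  have hs : 0 < t + b := by linarith
  set x := 2 * (b - a) * (t + b) with hx_def
  have hx : 0 ≤ x := mul_nonneg (mul_nonneg two_pos.le hba) hs.le
  have hE₀ : 0 ≤ 1 - exp (-x) := sub_nonneg.2 (exp_le_one_iff.2 (by linarith))
  have hE₁ : 1 - exp (-x) ≤ 1 := sub_le_self _ (exp_pos _).le
  have hEx : 1 - exp (-x) ≤ x := by linarith [one_sub_le_exp_neg x]
  rw [abs_of_nonneg (by unfold laplaceKernel; positivity)]
  rcases le_or_gt (-b) (2 * t) with h_near | h_far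
  · have h_ratio : b / (t + b) ≤ 2 := by rw [div_le_iff₀ hs]; linarith
    have h_gauss : exp (-t ^ 2) ≤ exp (-(1 / 2) * t ^ 2) :=
      exp_le_exp.2 (by nlinarith [sq_nonneg t])
    calc laplaceKernel a b t ≤ 2 * exp (-t ^ 2) * 1 := by unfold laplaceKernel; gcongr
      _ ≤ 32 * exp (-(1 / 2) * t ^ 2) := by linarith [exp_pos (-(1 / 2) * t ^ 2)]
  · calc laplaceKernel a b t ≤ b / (t + b) * exp (-t ^ 2) * x := by unfold laplaceKernel; gcongr
      _ = 2 * b * (b - a) * exp (-t ^ 2) := by rw [hx_def]; field_simp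
      _ ≤ 16 * t ^ 2 * exp (-t ^ 2) := by
          gcongr ?_ * _; nlinarith [neg_abs_le a]
      _ ≤ 32 * exp (-(1 / 2) * t ^ 2) := by linarith [sq_mul_exp_neg_sq_le t]

theorem norm_indicator_laplaceKernel_le {a b : ℝ} (hab : |a| ≤ b) (t : ℝ) :
    ‖(Ioi (-b)).indicator (laplaceKernel a b) t‖ ≤ 32 * exp (-(1 / 2) * t ^ 2) := by
  rw [norm_indicator_eq_indicator_norm]
  exact indicator_apply_le' (fun ht => abs_laplaceKernel_le hab ht) fun _ => by positivity

theorem tendsto_laplaceKernel (a t : ℝ) :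
    Tendsto (fun b => laplaceKernel a b t) atTop (𝓝 (exp (-t ^ 2))) := by
  have h_ratio : Tendsto (fun b => b / (t + b)) atTop (𝓝 1) := by
    have h := ((tendsto_const_nhds (x := t)).div_atTop tendsto_id).add_const 1 |>.inv₀
      (by norm_num : (0 : ℝ) + 1 ≠ 0)
    rw [zero_add, inv_one] at h
    refine h.congr' ?_
    filter_upwards [eventually_gt_atTop 0] with b hb
    dsimp only [id]
    field_simp
  have h_exp : Tendsto (fun b => exp (-(2 * (b - a) * (t + b)))) atTop (𝓝 0) := by
    refine tendsto_exp_atBot.comp (tendsto_neg_atTop_atBot.comp ?_)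
    exact ((tendsto_atTop_add_const_right _ (-a) tendsto_id).const_mul_atTop
      two_pos).atTop_mul_atTop₀ (tendsto_atTop_add_const_left _ t tendsto_id)
  simpa [laplaceKernel] using (h_ratio.mul_const (exp (-t ^ 2))).mul (h_exp.const_sub 1)

theorem tendsto_indicator_laplaceKernel (a t : ℝ) :
    Tendsto (fun b => (Ioi (-b)).indicator (laplaceKernel a b) t) atTop (𝓝 (exp (-t ^ 2))) := by
  refine (tendsto_laplaceKernel a t).congr' ?_
  filter_upwards [eventually_gt_atTop (-t)] with b hb
  rw [indicator_of_mem (show t ∈ Ioi (-b) from neg_lt.1 hb)]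

/-- **Laplace asymptotics of the stationary firing-rate integral.** Fix `a : ℝ` and for
`b : ℝ` let `F b = ∫_0^∞ e^{−y²} (e^{2by} − e^{2ay}) / y dy`. Then
`b · e^{−b²} · F b → √π` as `b → +∞`, i.e. `F b ∼ √π e^{b²} / b`. -/
theorem laplace_asymptotics_firing_rate (a : ℝ) :
    Tendsto
      (fun b : ℝ =>
        b * Real.exp (-b ^ 2) *
          ∫ y in Set.Ioi (0 : ℝ),
            Real.exp (-y ^ 2) * (Real.exp (2 * b * y) - Real.exp (2 * a * y)) / y)
      atTop (nhds (Real.sqrt Real.pi)) := by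
  simp_rw [integral_eq_setIntegral_laplaceKernel, ← integral_indicator measurableSet_Ioi]
  have h_gauss : ∫ t : ℝ, exp (-t ^ 2) = √π := by simpa using integral_gaussian 1
  rw [← h_gauss]
  refine tendsto_integral_filter_of_dominated_convergence (fun t => 32 * exp (-(1 / 2) * t ^ 2))
    (Eventually.of_forall fun b => ?_) ?_ ((integrable_exp_neg_mul_sq (by norm_num)).const_mul 32)
    (ae_of_all _ (tendsto_indicator_laplaceKernel a))
  · have h_meas : Measurable (laplaceKernel a b) := by unfold laplaceKernel; fun_prop
    exact (h_meas.indicator measurableSet_Ioi).aestronglyMeasurable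
  · filter_upwards [eventually_ge_atTop |a|] with b hb
    exact ae_of_all _ (norm_indicator_laplaceKernel_le hb)
end
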